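/- arXiv:2105.01163 — 3 statements merged into one kernel-verified Lean document; each statement's English description precedes it below -/
import Mathlib

section
/- For all real numbers a and b, (1/2)·exp(min(a,b))·(a − b)² ≤ (exp(a) − exp(b))·a − (U(a) − U(b)) ≤ (1/2)·exp(max(a,b))·(a − b)². -/
/-!
The middle expression is the Bregman divergence `exp a - exp b - exp' b * (a - b)` of `exp`.
By Taylor's theorem with Lagrange remainder it equals `exp ξ * (a - b) ^ 2 / 2` for some `ξ`
between `a` and `b`, and `exp (min a b) ≤ exp ξ ≤ exp (max a b)`.
-/

/-- The entropy `c (log c - 1)` expressed in the entropy variable `η = log c`. -/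
noncomputable def U (η : ℝ) : ℝ := Real.exp η * (η - 1)

open Real Set

theorem exists_sub_sub_deriv_mul_eq_iteratedDeriv_two {f : ℝ → ℝ} (hf : ContDiff ℝ 2 f)
    {a b : ℝ} (hab : b ≠ a) :
    ∃ ξ ∈ uIoo b a, f a - f b - deriv f b * (a - b) = iteratedDeriv 2 f ξ * (a - b) ^ 2 / 2 := by
  obtain ⟨ξ, hξ, h⟩ := taylor_mean_remainder_lagrange_iteratedDeriv (n := 1) hab hf.contDiffOn
  have hderiv : iteratedDerivWithin 1 f (uIcc b a) b = deriv f b := by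
    rw [iteratedDerivWithin_one]
    exact (hf.differentiable (by norm_num) b).derivWithin
      (uniqueDiffOn_uIcc hab b left_mem_uIcc)
  rw [taylorWithinEval_succ, taylor_within_zero_eval, hderiv, smul_eq_mul] at h
  norm_num at h
  exact ⟨ξ, hξ, by linear_combination h⟩

theorem bregman_remainder_two_sided_bound (a b : ℝ) :
    (1 / 2) * Real.exp (min a b) * (a - b) ^ 2
        ≤ (Real.exp a - Real.exp b) * a - (U a - U b) ∧
    (Real.exp a - Real.exp b) * a - (U a - U b)
        ≤ (1 / 2) * Real.exp (max a b) * (a - b) ^ 2 := by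
  have hbregman : (exp a - exp b) * a - (U a - U b) = exp a - exp b - deriv exp b * (a - b) := by
    rw [Real.deriv_exp]; unfold U; ring
  rcases eq_or_ne b a with rfl | hab
  · simp [U]
  obtain ⟨ξ, ⟨hminξ, hξmax⟩, hξ⟩ := exists_sub_sub_deriv_mul_eq_iteratedDeriv_two contDiff_exp hab
  rw [iteratedDeriv_eq_iterate, iter_deriv_exp] at hξ
  rw [hbregman, hξ, min_comm, max_comm]
  have hsq := sq_nonneg (a - b)
  constructor <;> nlinarith [exp_lt_exp.2 hminξ, exp_lt_exp.2 hξmax]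
end

section
/- For all real numbers a and b, (exp(a) − exp(b))·a ≥ U(a) − U(b), with equality if and only if a = b. -/
namespace Real

theorem exp_mul_sub_add_one_le_exp (a b : ℝ) : exp b * (a - b + 1) ≤ exp a := by
  calc exp b * (a - b + 1) ≤ exp b * exp (a - b) := by gcongr; exact add_one_le_exp _
    _ = exp a := by rw [← exp_add, add_sub_cancel]

theorem exp_mul_sub_add_one_lt_exp {a b : ℝ} (h : a ≠ b) : exp b * (a - b + 1) < exp a := by
  calc exp b * (a - b + 1) < exp b * exp (a - b) := by
        gcongr; exact add_one_lt_exp (sub_ne_zero.mpr h)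
    _ = exp a := by rw [← exp_add, add_sub_cancel]

theorem exp_mul_sub_add_one_eq_exp_iff {a b : ℝ} : exp b * (a - b + 1) = exp a ↔ a = b := by
  refine ⟨fun h => ?_, fun h => by simp [h]⟩
  by_contra hne
  exact (exp_mul_sub_add_one_lt_exp hne).ne h

end Real

/-- The dissipation is the Bregman divergence of `exp` between `a` and `b`. -/
theorem exp_sub_exp_mul_sub_U_sub_U (a b : ℝ) :
    (Real.exp a - Real.exp b) * a - (U a - U b) = Real.exp a - Real.exp b * (a - b + 1) := by
  unfold U
  ring

theorem numerical_dissipation_nonneg (a b : ℝ) :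
    (Real.exp a - Real.exp b) * a ≥ U a - U b ∧
    ((Real.exp a - Real.exp b) * a = U a - U b ↔ a = b) := by
  have hbregman := exp_sub_exp_mul_sub_U_sub_U a b
  refine ⟨?_, ?_⟩
  · linarith [Real.exp_mul_sub_add_one_le_exp a b]
  · refine Iff.trans ?_ Real.exp_mul_sub_add_one_eq_exp_iff
    constructor <;> intro h <;> linarith
end

section
/- Let s ≤ t be real numbers, let u : ℝ → ℝ be continuously differentiable on [s, t], and let p be a real number with p ≠ u(s). Then there exists ξ strictly between p and u(s) such that ∫_s^t (d/dτ)[exp(u(τ))]·u(τ) dτ + (exp(u(s)) − exp(p))·u(s) = U(u(t)) − U(p) + (1/2)·exp(ξ)·(p − u(s))². -/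
open Set

lemma hasDerivAt_U (x : ℝ) : HasDerivAt U (x * Real.exp x) x :=
  ((Real.hasDerivAt_exp x).mul ((hasDerivAt_id' x).sub_const 1)).congr_deriv (by ring)

lemma integral_mul_exp_eq_U_sub_U (a b : ℝ) :
    ∫ η in a..b, η * Real.exp η = U b - U a :=
  intervalIntegral.integral_eq_sub_of_hasDerivAt (fun x _ => hasDerivAt_U x)
    ((by fun_prop : Continuous fun η => η * Real.exp η).intervalIntegrable _ _)

lemma integral_mul_deriv_mul_exp_eq_U_sub_U {s t : ℝ} {u u' : ℝ → ℝ}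
    (hderiv : ∀ τ ∈ uIcc s t, HasDerivAt u (u' τ) τ) (hcont : ContinuousOn u' (uIcc s t)) :
    ∫ τ in s..t, u τ * u' τ * Real.exp (u τ) = U (u t) - U (u s) := by
  have hsubst := intervalIntegral.integral_comp_mul_deriv hderiv hcont
    (by fun_prop : Continuous fun η => η * Real.exp η)
  simp only [Function.comp_apply, mul_right_comm _ (Real.exp _)] at hsubst
  rw [hsubst, integral_mul_exp_eq_U_sub_U]

lemma exists_ratio_hasDerivAt_eq_ratio_slope_of_ne {f f' g g' : ℝ → ℝ}
    (hf : ∀ x, HasDerivAt f (f' x) x) (hg : ∀ x, HasDerivAt g (g' x) x) {a b : ℝ}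
    (hab : a ≠ b) :
    ∃ c, min a b < c ∧ c < max a b ∧ (g b - g a) * f' c = (f b - f a) * g' c := by
  have cauchy {x y : ℝ} (hxy : x < y) :
      ∃ c ∈ Ioo x y, (g y - g x) * f' c = (f y - f x) * g' c :=
    exists_ratio_hasDerivAt_eq_ratio_slope f f' hxy
      (fun z _ => (hf z).continuousAt.continuousWithinAt) (fun z _ => hf z) g g'
      (fun z _ => (hg z).continuousAt.continuousWithinAt) (fun z _ => hg z)
  rcases hab.lt_or_gt with hlt | hgt
  · obtain ⟨c, ⟨hac, hcb⟩, hc⟩ := cauchy hlt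
    exact ⟨c, by rwa [min_eq_left hlt.le], by rwa [max_eq_right hlt.le], hc⟩
  · obtain ⟨c, ⟨hbc, hca⟩, hc⟩ := cauchy hgt
    refine ⟨c, by rwa [min_eq_right hgt.le], by rwa [max_eq_left hgt.le], ?_⟩
    linear_combination -hc

lemma exists_U_sub_U_sub_mul_exp_sub_exp_eq {a p : ℝ} (hpa : p ≠ a) :
    ∃ ξ, min p a < ξ ∧ ξ < max p a ∧
      U p - U a - a * (Real.exp p - Real.exp a) = 1 / 2 * Real.exp ξ * (p - a) ^ 2 := by
  have hF (x : ℝ) : HasDerivAt (fun y => U y - a * Real.exp y) ((x - a) * Real.exp x) x :=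
    ((hasDerivAt_U x).sub ((Real.hasDerivAt_exp x).const_mul a)).congr_deriv (by ring)
  have hG (x : ℝ) : HasDerivAt (fun y => (y - a) ^ 2 / 2) (x - a) x :=
    ((((hasDerivAt_id' x).sub_const a).pow 2).div_const 2).congr_deriv (by norm_num)
  obtain ⟨ξ, hlo, hhi, hξ⟩ := exists_ratio_hasDerivAt_eq_ratio_slope_of_ne hF hG hpa
  have hξa : ξ - a ≠ 0 := by
    rintro hξa
    rw [sub_eq_zero.1 hξa, min_lt_iff, lt_self_iff_false, or_false] at hlo
    rw [sub_eq_zero.1 hξa, lt_max_iff, lt_self_iff_false, or_false] at hhi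
    exact lt_asymm hlo hhi
  exact ⟨ξ, hlo, hhi, mul_right_cancel₀ hξa (by linear_combination hξ)⟩

theorem upwind_slab_energy_identity (s t : ℝ) (hst : s ≤ t) (u u' : ℝ → ℝ)
    (hderiv : ∀ τ ∈ Set.Icc s t, HasDerivAt u (u' τ) τ)
    (hcont : ContinuousOn u' (Set.Icc s t))
    (p : ℝ) (hp : p ≠ u s) :
    ∃ ξ : ℝ, min p (u s) < ξ ∧ ξ < max p (u s) ∧
      (∫ τ in s..t, u τ * u' τ * Real.exp (u τ))
          + (Real.exp (u s) - Real.exp p) * u s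
        = U (u t) - U p + (1 / 2) * Real.exp ξ * (p - u s) ^ 2 := by
  rw [← uIcc_of_le hst] at hderiv hcont
  obtain ⟨ξ, hlo, hhi, hξ⟩ := exists_U_sub_U_sub_mul_exp_sub_exp_eq hp
  refine ⟨ξ, hlo, hhi, ?_⟩
  rw [integral_mul_deriv_mul_exp_eq_U_sub_U hderiv hcont]
  linear_combination hξ
end
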